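/- Let ψ:ℝ²→ℝ×ℝ² be a C∞ function satisfying: ψ(x,θ+2π)=ψ(x,θ); ψ(x,θ)=(x, cos θ, sin θ) for x ≤ 0; ψ(x,θ)=(0, eˣ·cos θ, eˣ·sin θ) for x ≥ 1; and, writing ψ(x,θ)=(a,b) with b∈ℝ², |b| ≤ e whenever x ≤ 1. Let ū₀:(0,∞)→ℝ be globally Lipschitz and set u₀(x) := ū₀(eˣ). Fix T>0 and K≥0. Then there exists C₂>0, depending only on the Lipschitz constant of ū₀, the value of ū₀ at 1, K and T, such that for all ε ∈ (0,1], t ∈ [0,T] and x,y,θ,σ ∈ ℝ: |u₀(x) − u₀(y)| ≤ C₂ + e^{Kt}·|ψ(x,θ)−ψ(y,σ)|²/(4ε), and |θ−σ| ≤ C₂ + (1/(2ε))·(|θ−σ| − π/3)₊². -/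

import Mathlib

open Set Real Filter
open scoped ContDiff

/-- Euclidean norm on `ℝ²`. -/
noncomputable def norm2 (p : ℝ × ℝ) : ℝ := Real.sqrt (p.1 ^ 2 + p.2 ^ 2)

/-- Euclidean norm on `ℝ³ = ℝ × ℝ²`. -/
noncomputable def norm3 (p : ℝ × ℝ × ℝ) : ℝ := Real.sqrt (p.1 ^ 2 + p.2.1 ^ 2 + p.2.2 ^ 2)

/-!
The radial part `|ψ(x,θ).2|` differs from `eˣ` by at most `e`: the two agree for `x ≥ 1`, and
both lie in `[0, e]` for `x ≤ 1`. Hence `|eˣ - eʸ| ≤ 2e + D` with `D = |ψ(x,θ) - ψ(y,σ)|`, so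
`|u₀(x) - u₀(y)| ≤ L(2e + D) ≤ 2Le + L² + D²/4`, and `D²/4 ≤ e^{Kt} D²/(4ε)` because
`e^{Kt}/ε ≥ 1`. The angular estimate is `a ≤ c + m ≤ c + 1/2 + m²/2` for `m = (a - c)₊`.
-/

lemma norm2_eq_norm_equivRealProdAddHom_symm (p : ℝ × ℝ) :
    norm2 p = ‖Complex.equivRealProdAddHom.symm p‖ := by
  rw [Complex.norm_def, Complex.normSq_apply, norm2]
  simp [sq]

lemma abs_norm2_sub_norm2_le (p q : ℝ × ℝ) : |norm2 p - norm2 q| ≤ norm2 (p - q) := by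
  simp only [norm2_eq_norm_equivRealProdAddHom_symm, map_sub]
  exact abs_norm_sub_norm_le _ _

lemma norm2_mul_cos_mul_sin {r : ℝ} (hr : 0 ≤ r) (θ : ℝ) :
    norm2 (r * cos θ, r * sin θ) = r := by
  rw [norm2, show (r * cos θ) ^ 2 + (r * sin θ) ^ 2 = r ^ 2 by
    linear_combination r ^ 2 * sin_sq_add_cos_sq θ, sqrt_sq hr]

lemma norm2_snd_le_norm3 (q : ℝ × ℝ × ℝ) : norm2 q.2 ≤ norm3 q :=
  sqrt_le_sqrt (by nlinarith [sq_nonneg q.1])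

section Interpolation

variable {ψ : ℝ × ℝ → ℝ × ℝ × ℝ}
  (hψcart : ∀ x θ : ℝ, 1 ≤ x →
    ψ (x, θ) = (0, Real.exp x * Real.cos θ, Real.exp x * Real.sin θ))
  (hψbd : ∀ x θ : ℝ, x ≤ 1 → norm2 (ψ (x, θ)).2 ≤ Real.exp 1)
include hψcart hψbd

lemma abs_exp_sub_norm2_snd_le (x θ : ℝ) : |exp x - norm2 (ψ (x, θ)).2| ≤ exp 1 := by
  rcases le_total x 1 with hx | hx
  · exact abs_sub_le_of_nonneg_of_le (exp_pos x).le (exp_le_exp.mpr hx)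
      (sqrt_nonneg _) (hψbd x θ hx)
  · rw [hψcart x θ hx, norm2_mul_cos_mul_sin (exp_pos x).le, sub_self, abs_zero]
    exact (exp_pos 1).le

lemma abs_exp_sub_exp_le (x y θ σ : ℝ) :
    |exp x - exp y| ≤ 2 * exp 1 + norm3 (ψ (x, θ) - ψ (y, σ)) := by
  set p := (ψ (x, θ)).2
  set q := (ψ (y, σ)).2
  calc |exp x - exp y|
      ≤ |exp x - norm2 p| + |norm2 p - norm2 q| + |norm2 q - exp y| := by
        linarith [abs_sub_le (exp x) (norm2 p) (exp y), abs_sub_le (norm2 p) (norm2 q) (exp y)]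
    _ ≤ exp 1 + norm2 (p - q) + exp 1 := by
        gcongr
        · exact abs_exp_sub_norm2_snd_le hψcart hψbd x θ
        · exact abs_norm2_sub_norm2_le p q
        · rw [abs_sub_comm]
          exact abs_exp_sub_norm2_snd_le hψcart hψbd y σ
    _ ≤ 2 * exp 1 + norm3 (ψ (x, θ) - ψ (y, σ)) := by
        have := norm2_snd_le_norm3 (ψ (x, θ) - ψ (y, σ))
        rw [Prod.snd_sub] at this
        linarith

end Interpolation

lemma abs_sub_le_sq_add_of_lipschitzOnWith {f : ℝ → ℝ} {L : NNReal} {s : Set ℝ}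
    (hf : LipschitzOnWith L f s) {a b c D : ℝ} (ha : a ∈ s) (hb : b ∈ s)
    (hab : |a - b| ≤ c + D) :
    |f a - f b| ≤ L ^ 2 + L * c + D ^ 2 / 4 := by
  have hL : (0 : ℝ) ≤ L := L.coe_nonneg
  calc |f a - f b| ≤ L * |a - b| := by simpa only [dist_eq] using hf.dist_le_mul a ha b hb
    _ ≤ L * (c + D) := mul_le_mul_of_nonneg_left hab hL
    _ ≤ L ^ 2 + L * c + D ^ 2 / 4 := by nlinarith [sq_nonneg (D / 2 - L)]

lemma sq_div_four_le_mul_sq_div {w ε : ℝ} (hw : 1 ≤ w) (hε : 0 < ε) (hε1 : ε ≤ 1) (D : ℝ) :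
    D ^ 2 / 4 ≤ w * D ^ 2 / (4 * ε) := by
  rw [div_le_div_iff₀ (by norm_num) (by positivity)]
  nlinarith [sq_nonneg D, mul_le_mul hw hε1 hε.le (by linarith)]

lemma le_add_half_add_max_sub_zero_sq_div {ε : ℝ} (hε : 0 < ε) (hε1 : ε ≤ 1) (a c : ℝ) :
    a ≤ c + 1 / 2 + 1 / (2 * ε) * max (a - c) 0 ^ 2 := by
  set m := max (a - c) 0
  have hm : a - c ≤ m := le_max_left _ _
  have hhalf : (1 : ℝ) / 2 ≤ 1 / (2 * ε) := one_div_le_one_div_of_le (by positivity) (by linarith)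
  nlinarith [sq_nonneg (m - 1), mul_le_mul_of_nonneg_right hhalf (sq_nonneg m)]

theorem a_priori_estimates (ψ : ℝ × ℝ → ℝ × ℝ × ℝ)
    (hψcart : ∀ x θ : ℝ, 1 ≤ x →
      ψ (x, θ) = (0, Real.exp x * Real.cos θ, Real.exp x * Real.sin θ))
    (hψbd : ∀ x θ : ℝ, x ≤ 1 → norm2 (ψ (x, θ)).2 ≤ Real.exp 1)
    (u0bar : ℝ → ℝ) (L : NNReal) (hu0 : LipschitzOnWith L u0bar (Set.Ioi 0))
    (T K : ℝ) (hK : 0 ≤ K) :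
    ∃ C2 : ℝ, 0 < C2 ∧
      ∀ ε t x y θ σ : ℝ, 0 < ε → ε ≤ 1 → 0 ≤ t → t ≤ T →
        |u0bar (Real.exp x) - u0bar (Real.exp y)| ≤
            C2 + Real.exp (K * t) * norm3 (ψ (x, θ) - ψ (y, σ)) ^ 2 / (4 * ε) ∧
        |θ - σ| ≤ C2 + (1 / (2 * ε)) * max (|θ - σ| - π / 3) 0 ^ 2 := by
  refine ⟨L ^ 2 + L * (2 * exp 1) + (π / 3 + 1 / 2), by positivity, ?_⟩
  intro ε t x y θ σ hε hε1 ht _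
  have hu := abs_sub_le_sq_add_of_lipschitzOnWith hu0 (exp_pos x) (exp_pos y)
    (abs_exp_sub_exp_le hψcart hψbd x y θ σ)
  have hweight := sq_div_four_le_mul_sq_div (one_le_exp (mul_nonneg hK ht)) hε hε1
    (norm3 (ψ (x, θ) - ψ (y, σ)))
  have hθ := le_add_half_add_max_sub_zero_sq_div hε hε1 |θ - σ| (π / 3)
  have hL : (0 : ℝ) ≤ L ^ 2 + L * (2 * exp 1) := by positivity
  constructor <;> linarith [pi_pos]
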